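/- Let α₁, α₂, α₃ ∈ ℂ with |α₁|² + |α₂|² + |α₃|² = 1 and let ψ = α₁·|100⟩ + α₂·|010⟩ + α₃·|001⟩. Then both the CKW monogamy inequality and its dual hold with equality: C(ρ_AB)² + C(ρ_AS)² = 4·det ρ_A = C_a(ρ_AB)² + C_a(ρ_AS)², where in fact C(ρ_AB) = C_a(ρ_AB) = 2|α₁|·|α₂|, C(ρ_AS) = C_a(ρ_AS) = 2|α₁|·|α₃|, and 4·det ρ_A = 4|α₁|²(|α₂|² + |α₃|²). -/

import Mathlib

open Matrix Complex Kronecker Finset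
open scoped ComplexOrder

noncomputable section

abbrev TwoQubitMat := Matrix (Fin 2 × Fin 2) (Fin 2 × Fin 2) ℂ

def sigmaY : Matrix (Fin 2) (Fin 2) ℂ := !![0, -Complex.I; Complex.I, 0]

def spinFlip (ρ : TwoQubitMat) : TwoQubitMat :=
  (sigmaY ⊗ₖ sigmaY) * ρ.map (starRingEnd ℂ) * (sigmaY ⊗ₖ sigmaY)

def matSqrt {m : Type*} [Fintype m] [DecidableEq m] (M : Matrix m m ℂ) : Matrix m m ℂ :=
  open scoped Classical in
  if h : M.PosSemidef then h.1.eigenvectorUnitary.1 *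
    diagonal ((RCLike.ofReal : ℝ → ℂ) ∘ Real.sqrt ∘ h.1.eigenvalues) *
    (star h.1.eigenvectorUnitary : Matrix m m ℂ) else 0

def Rmat (ρ : TwoQubitMat) : TwoQubitMat :=
  matSqrt (matSqrt ρ * spinFlip ρ * matSqrt ρ)

def CoA (ρ : TwoQubitMat) : ℝ := (Rmat ρ).trace.re

def lmin2 (M : Matrix (Fin 2) (Fin 2) ℂ) : ℝ :=
  if h : M.IsHermitian then min (h.eigenvalues 0) (h.eigenvalues 1) else 0

def maxEig4 (M : TwoQubitMat) : ℝ :=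
  if h : M.IsHermitian then Finset.univ.sup' Finset.univ_nonempty h.eigenvalues else 0

def Conc (ρ : TwoQubitMat) : ℝ := max 0 (2 * maxEig4 (Rmat ρ) - (Rmat ρ).trace.re)

def eigMultiset (M : TwoQubitMat) : Multiset ℝ :=
  if h : M.IsHermitian then Finset.univ.val.map h.eigenvalues else 0

def rhoAB (ψ : Fin 2 → Fin 2 → Fin 2 → ℂ) : TwoQubitMat :=
  fun p q => ∑ l, ψ p.1 p.2 l * (starRingEnd ℂ) (ψ q.1 q.2 l)

def rhoAS (ψ : Fin 2 → Fin 2 → Fin 2 → ℂ) : TwoQubitMat :=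
  fun p q => ∑ j, ψ p.1 j p.2 * (starRingEnd ℂ) (ψ q.1 j q.2)

def rhoA (ψ : Fin 2 → Fin 2 → Fin 2 → ℂ) : Matrix (Fin 2) (Fin 2) ℂ :=
  fun i i' => ∑ j, ∑ l, ψ i j l * (starRingEnd ℂ) (ψ i' j l)

/-- The state `α₁|100⟩ + α₂|010⟩ + α₃|001⟩`. -/
def psiW3 (α₁ α₂ α₃ : ℂ) : Fin 2 → Fin 2 → Fin 2 → ℂ := fun i j l =>
  if i = 1 ∧ j = 0 ∧ l = 0 then α₁
  else if i = 0 ∧ j = 1 ∧ l = 0 then α₂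
  else if i = 0 ∧ j = 0 ∧ l = 1 then α₃
  else 0

/-! Write `ρ_AB = |x⟩⟨x| + |y⟩⟨y|` with `x = α₁|10⟩ + α₂|01⟩` and `y = α₃|00⟩`; `ρ_AS` is the same
matrix with Bob and Sapna exchanged. The vector `y` is orthogonal to `x`, to `x̃ = (σy ⊗ σy) x̄`
and to `ỹ ∝ |11⟩`, so `√ρ = |x⟩⟨x|/‖x‖ + |y⟩⟨y|/‖y‖` and `√ρ ρ̃ √ρ = (|⟨x|x̃⟩|/‖x‖)² |x⟩⟨x|`.
Hence `R(ρ) = (|⟨x|x̃⟩|/‖x‖²) |x⟩⟨x|` has rank one, and its trace and its largest eigenvalue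
both equal `|⟨x|x̃⟩| = 2|α₁||α₂|`, which makes `C = C_a`. -/

section KetBra

variable {m : Type*} [Fintype m]

def ketBra (x : m → ℂ) : Matrix m m ℂ := vecMulVec x (star x)

def vecNorm (x : m → ℂ) : ℝ := √(star x ⬝ᵥ x).re

lemma star_dotProduct_self_eq_vecNorm_sq (x : m → ℂ) :
    star x ⬝ᵥ x = (vecNorm x : ℂ) ^ 2 := by
  obtain ⟨hre, him⟩ := Complex.nonneg_iff.mp (dotProduct_star_self_nonneg x)
  rw [vecNorm, ← ofReal_pow, Real.sq_sqrt hre]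
  exact Complex.ext rfl him.symm

lemma vecNorm_nonneg (x : m → ℂ) : 0 ≤ vecNorm x := Real.sqrt_nonneg _

lemma vecNorm_eq_zero {x : m → ℂ} (hx : vecNorm x = 0) : x = 0 := by
  have h := star_dotProduct_self_eq_vecNorm_sq x
  rw [hx, ofReal_zero, zero_pow two_ne_zero] at h
  exact dotProduct_star_self_eq_zero.mp h

omit [Fintype m] in
lemma ketBra_zero : ketBra (0 : m → ℂ) = 0 := by
  simp [ketBra]

lemma ketBra_posSemidef (x : m → ℂ) : (ketBra x).PosSemidef :=
  posSemidef_vecMulVec_self_star x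

lemma trace_ketBra (x : m → ℂ) : (ketBra x).trace = (vecNorm x : ℂ) ^ 2 := by
  rw [ketBra, trace_vecMulVec, dotProduct_comm, star_dotProduct_self_eq_vecNorm_sq]

lemma ketBra_mul_ketBra (x y : m → ℂ) :
    ketBra x * ketBra y = (star x ⬝ᵥ y) • vecMulVec x (star y) := by
  rw [ketBra, ketBra, vecMulVec_mul_vecMulVec, vecMulVec_smul]

lemma ketBra_mul_ketBra_of_orthogonal {x y : m → ℂ} (h : star x ⬝ᵥ y = 0) :
    ketBra x * ketBra y = 0 := by
  rw [ketBra_mul_ketBra, h, zero_smul]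

lemma ketBra_mul_ketBra_of_orthogonal' {x y : m → ℂ} (h : star y ⬝ᵥ x = 0) :
    ketBra x * ketBra y = 0 :=
  ketBra_mul_ketBra_of_orthogonal (by rw [star_dotProduct, h, star_zero])

lemma ketBra_mul_self (x : m → ℂ) : ketBra x * ketBra x = (vecNorm x : ℂ) ^ 2 • ketBra x := by
  rw [ketBra_mul_ketBra, star_dotProduct_self_eq_vecNorm_sq, ketBra]

lemma ketBra_mul_ketBra_mul_ketBra (x y : m → ℂ) :
    ketBra x * ketBra y * ketBra x = ((‖star x ⬝ᵥ y‖ ^ 2 : ℝ) : ℂ) • ketBra x := by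
  rw [ketBra_mul_ketBra, smul_mul_assoc, ketBra, vecMulVec_mul_vecMulVec, vecMulVec_smul,
    smul_smul, star_dotProduct y, Complex.star_def, Complex.mul_conj', ofReal_pow]

lemma div_vecNorm_sq_mul_vecNorm_sq_smul_ketBra (c : ℂ) (x : m → ℂ) :
    (c / (vecNorm x : ℂ) ^ 2 * (vecNorm x : ℂ) ^ 2) • ketBra x = c • ketBra x := by
  by_cases hx : vecNorm x = 0
  · rw [vecNorm_eq_zero hx, ketBra_zero, smul_zero, smul_zero]
  · rw [div_mul_cancel₀ _ (pow_ne_zero 2 (ofReal_ne_zero.mpr hx))]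

end KetBra

section MatSqrt

variable {m : Type*} [Fintype m] [DecidableEq m]

open scoped MatrixOrder in
lemma matSqrt_eq_of_mul_self {M S : Matrix m m ℂ} (hS : S.PosSemidef) (hSS : S * S = M) :
    matSqrt M = S := by
  have hM : M.PosSemidef := by
    rw [← hSS]
    nth_rewrite 1 [← hS.1]
    exact posSemidef_conjTranspose_mul_self S
  rw [matSqrt, dif_pos hM, ← CFC.sqrt_unique hSS hS.nonneg, CFC.sqrt_eq_cfc,
    cfc_nnreal_eq_real _ M hM.nonneg, hM.1.cfc_eq]
  simp only [IsHermitian.cfc, Unitary.conjStarAlgAut_apply]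
  rw [show (fun x : ℝ => ((NNReal.sqrt x.toNNReal : NNReal) : ℝ)) = Real.sqrt from
    funext fun x => by rw [Real.sqrt]]

lemma matSqrt_smul_ketBra {c : ℝ} (hc : 0 ≤ c) (x : m → ℂ) :
    matSqrt ((c : ℂ) • ketBra x) = ((√c / vecNorm x : ℝ) : ℂ) • ketBra x := by
  refine matSqrt_eq_of_mul_self
    ((ketBra_posSemidef x).smul (zero_le_real.mpr (div_nonneg (Real.sqrt_nonneg c)
      (vecNorm_nonneg x)))) ?_
  rw [smul_mul_smul_comm, ketBra_mul_self, smul_smul, ← sq, ofReal_div, div_pow, ← ofReal_pow,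
    Real.sq_sqrt hc, div_vecNorm_sq_mul_vecNorm_sq_smul_ketBra]

lemma matSqrt_ketBra_add_ketBra {x y : m → ℂ} (hxy : star x ⬝ᵥ y = 0) :
    matSqrt (ketBra x + ketBra y) =
      ((vecNorm x)⁻¹ : ℂ) • ketBra x + ((vecNorm y)⁻¹ : ℂ) • ketBra y := by
  have hinv (z : m → ℂ) : ((vecNorm z)⁻¹ : ℂ) • ketBra z * ((vecNorm z)⁻¹ : ℂ) • ketBra z
      = ketBra z := by
    rw [smul_mul_smul_comm, ketBra_mul_self, smul_smul, ← sq, inv_pow, ← one_div,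
      div_vecNorm_sq_mul_vecNorm_sq_smul_ketBra, one_smul]
  refine matSqrt_eq_of_mul_self (((ketBra_posSemidef x).smul ?_).add
    ((ketBra_posSemidef y).smul ?_)) ?_
  · exact_mod_cast inv_nonneg.mpr (vecNorm_nonneg x)
  · exact_mod_cast inv_nonneg.mpr (vecNorm_nonneg y)
  rw [add_mul, mul_add, mul_add, hinv, hinv, smul_mul_smul_comm, smul_mul_smul_comm,
    ketBra_mul_ketBra_of_orthogonal hxy, ketBra_mul_ketBra_of_orthogonal' hxy, smul_zero,
    smul_zero, add_zero, zero_add]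

end MatSqrt

section Eigenvalues

variable {m : Type*} [Fintype m] [DecidableEq m]

lemma Matrix.IsHermitian.eigenvalues_eq_zero_or_eq_of_mul_self_eq_smul {R : Matrix m m ℂ}
    (hR : R.IsHermitian) {t : ℝ} (hRR : R * R = (t : ℂ) • R) (i : m) :
    hR.eigenvalues i = 0 ∨ hR.eigenvalues i = t := by
  set v : m → ℂ := ⇑(hR.eigenvectorBasis i)
  set μ := hR.eigenvalues i
  have hv : R *ᵥ v = (μ : ℂ) • v := by
    rw [hR.mulVec_eigenvectorBasis, Complex.coe_smul]
  have hv0 : v ≠ 0 := (WithLp.ofLp_eq_zero 2).ne.2 (hR.eigenvectorBasis.orthonormal.ne_zero i)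
  have hμ : ((μ * (μ - t) : ℝ) : ℂ) • v = 0 := by
    calc ((μ * (μ - t) : ℝ) : ℂ) • v = R *ᵥ (R *ᵥ v) - (t : ℂ) • (R *ᵥ v) := by
          rw [hv, mulVec_smul, hv, smul_smul, smul_smul, ← sub_smul]
          push_cast
          ring_nf
      _ = 0 := by rw [mulVec_mulVec, hRR, smul_mulVec, sub_self]
  rcases mul_eq_zero.mp (ofReal_eq_zero.mp ((smul_eq_zero.mp hμ).resolve_right hv0)) with h | h
  · exact Or.inl h
  · exact Or.inr (sub_eq_zero.mp h)

end Eigenvalues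

lemma maxEig4_eq_of_mul_self_eq_smul {R : TwoQubitMat} (hR : R.PosSemidef) {t : ℝ}
    (htr : R.trace = t) (hRR : R * R = (t : ℂ) • R) : maxEig4 R = t := by
  -- the eigenvalues lie in `{0, t}` and sum to `t`
  have heig := hR.1.eigenvalues_eq_zero_or_eq_of_mul_self_eq_smul hRR
  have hsum : ∑ i, hR.1.eigenvalues i = t := by
    simpa using congrArg Complex.re (hR.1.trace_eq_sum_eigenvalues.symm.trans htr)
  have ht : 0 ≤ t := hsum ▸ Finset.sum_nonneg fun i _ => hR.eigenvalues_nonneg i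
  rw [maxEig4, dif_pos hR.1]
  refine le_antisymm (Finset.sup'_le _ _ fun i _ => ?_) ?_
  · rcases heig i with h | h <;> rw [h]
    exact ht
  · by_cases hex : ∃ i, hR.1.eigenvalues i = t
    · obtain ⟨i, hi⟩ := hex
      exact hi ▸ Finset.le_sup' _ (Finset.mem_univ i)
    · have hzero (i) : hR.1.eigenvalues i = 0 := (heig i).resolve_right fun h => hex ⟨i, h⟩
      simp only [hzero, Finset.sum_const_zero] at hsum
      exact hsum ▸ hzero (0, 0) ▸ Finset.le_sup' _ (Finset.mem_univ (0, 0))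

lemma maxEig4_smul_ketBra {c : ℝ} (hc : 0 ≤ c) (x : Fin 2 × Fin 2 → ℂ) :
    maxEig4 ((c : ℂ) • ketBra x) = c * vecNorm x ^ 2 := by
  refine maxEig4_eq_of_mul_self_eq_smul ((ketBra_posSemidef x).smul (zero_le_real.mpr hc)) ?_ ?_
  · rw [trace_smul, trace_ketBra, smul_eq_mul]
    push_cast
    ring
  · rw [smul_mul_smul_comm, ketBra_mul_self, smul_smul, smul_smul]
    push_cast
    ring_nf

def spinFlipVec (x : Fin 2 × Fin 2 → ℂ) : Fin 2 × Fin 2 → ℂ := (sigmaY ⊗ₖ sigmaY) *ᵥ star x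

lemma conjTranspose_sigmaY_kronecker_sigmaY : (sigmaY ⊗ₖ sigmaY)ᴴ = sigmaY ⊗ₖ sigmaY := by
  ext ⟨i, j⟩ ⟨k, l⟩
  fin_cases i <;> fin_cases j <;> fin_cases k <;> fin_cases l <;> simp [sigmaY]

lemma transpose_sigmaY_kronecker_sigmaY : (sigmaY ⊗ₖ sigmaY)ᵀ = sigmaY ⊗ₖ sigmaY := by
  ext ⟨i, j⟩ ⟨k, l⟩
  fin_cases i <;> fin_cases j <;> fin_cases k <;> fin_cases l <;> simp [sigmaY]

lemma spinFlipVec_zero : spinFlipVec 0 = 0 := by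
  rw [spinFlipVec, star_zero, mulVec_zero]

lemma star_dotProduct_spinFlipVec_comm (x y : Fin 2 × Fin 2 → ℂ) :
    star x ⬝ᵥ spinFlipVec y = star y ⬝ᵥ spinFlipVec x := by
  rw [spinFlipVec, spinFlipVec, dotProduct_mulVec, dotProduct_comm, ← mulVec_transpose,
    transpose_sigmaY_kronecker_sigmaY]

lemma spinFlip_add (A B : TwoQubitMat) : spinFlip (A + B) = spinFlip A + spinFlip B := by
  rw [spinFlip, spinFlip, spinFlip, Matrix.map_add _ (map_add _), mul_add, add_mul]

lemma spinFlip_ketBra (x : Fin 2 × Fin 2 → ℂ) : spinFlip (ketBra x) = ketBra (spinFlipVec x) := by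
  have hmap : (ketBra x).map (starRingEnd ℂ) = vecMulVec (star x) x := by
    ext p q
    simp [ketBra, vecMulVec_apply]
  rw [spinFlip, hmap, mul_vecMulVec, vecMulVec_mul, ketBra, spinFlipVec, star_mulVec, star_star,
    conjTranspose_sigmaY_kronecker_sigmaY]

lemma norm_div_vecNorm_sq_mul_vecNorm_sq (x : Fin 2 × Fin 2 → ℂ) :
    ‖star x ⬝ᵥ spinFlipVec x‖ / vecNorm x ^ 2 * vecNorm x ^ 2 = ‖star x ⬝ᵥ spinFlipVec x‖ := by
  by_cases hx : vecNorm x = 0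
  · simp [vecNorm_eq_zero hx, spinFlipVec_zero]
  · exact div_mul_cancel₀ _ (pow_ne_zero 2 hx)

section RankTwo

variable {x y : Fin 2 × Fin 2 → ℂ}

lemma matSqrt_mul_spinFlip_mul_matSqrt_ketBra_add_ketBra (hyx : star y ⬝ᵥ x = 0)
    (hyx' : star y ⬝ᵥ spinFlipVec x = 0) (hyy' : star y ⬝ᵥ spinFlipVec y = 0) :
    matSqrt (ketBra x + ketBra y) * spinFlip (ketBra x + ketBra y) *
        matSqrt (ketBra x + ketBra y) =
      ((((vecNorm x)⁻¹ * ‖star x ⬝ᵥ spinFlipVec x‖) ^ 2 : ℝ) : ℂ) • ketBra x := by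
  have hxy : star x ⬝ᵥ y = 0 := by rw [star_dotProduct, hyx, star_zero]
  have hxy' : star x ⬝ᵥ spinFlipVec y = 0 := by rw [star_dotProduct_spinFlipVec_comm, hyx']
  rw [matSqrt_ketBra_add_ketBra hxy, spinFlip_add, spinFlip_ketBra, spinFlip_ketBra]
  simp only [add_mul, mul_add, smul_mul_assoc, mul_smul_comm, Matrix.mul_assoc,
    ketBra_mul_ketBra_of_orthogonal hxy', ketBra_mul_ketBra_of_orthogonal hyx',
    ketBra_mul_ketBra_of_orthogonal hyy', ketBra_mul_ketBra_of_orthogonal' hyx', mul_zero,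
    smul_zero, add_zero]
  rw [← Matrix.mul_assoc, ketBra_mul_ketBra_mul_ketBra, smul_smul, smul_smul]
  push_cast
  ring_nf

lemma Rmat_ketBra_add_ketBra (hyx : star y ⬝ᵥ x = 0) (hyx' : star y ⬝ᵥ spinFlipVec x = 0)
    (hyy' : star y ⬝ᵥ spinFlipVec y = 0) :
    Rmat (ketBra x + ketBra y) =
      ((‖star x ⬝ᵥ spinFlipVec x‖ / vecNorm x ^ 2 : ℝ) : ℂ) • ketBra x := by
  rw [Rmat, matSqrt_mul_spinFlip_mul_matSqrt_ketBra_add_ketBra hyx hyx' hyy',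
    matSqrt_smul_ketBra (sq_nonneg _),
    Real.sqrt_sq (mul_nonneg (inv_nonneg.mpr (vecNorm_nonneg x)) (norm_nonneg _))]
  congr 2
  ring

lemma coA_ketBra_add_ketBra (hyx : star y ⬝ᵥ x = 0) (hyx' : star y ⬝ᵥ spinFlipVec x = 0)
    (hyy' : star y ⬝ᵥ spinFlipVec y = 0) :
    CoA (ketBra x + ketBra y) = ‖star x ⬝ᵥ spinFlipVec x‖ := by
  rw [CoA, Rmat_ketBra_add_ketBra hyx hyx' hyy', trace_smul, trace_ketBra, smul_eq_mul,
    ← ofReal_pow, ← ofReal_mul, ofReal_re, norm_div_vecNorm_sq_mul_vecNorm_sq]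

lemma conc_ketBra_add_ketBra (hyx : star y ⬝ᵥ x = 0) (hyx' : star y ⬝ᵥ spinFlipVec x = 0)
    (hyy' : star y ⬝ᵥ spinFlipVec y = 0) :
    Conc (ketBra x + ketBra y) = ‖star x ⬝ᵥ spinFlipVec x‖ := by
  have hCoA := coA_ketBra_add_ketBra hyx hyx' hyy'
  rw [CoA] at hCoA
  rw [Conc, hCoA, Rmat_ketBra_add_ketBra hyx hyx' hyy',
    maxEig4_smul_ketBra (div_nonneg (norm_nonneg _) (sq_nonneg _)),
    norm_div_vecNorm_sq_mul_vecNorm_sq, two_mul, add_sub_cancel_right,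
    max_eq_right (norm_nonneg _)]

end RankTwo

lemma rhoAB_eq_ketBra_add_ketBra (ψ : Fin 2 → Fin 2 → Fin 2 → ℂ) :
    rhoAB ψ = ketBra (fun p => ψ p.1 p.2 0) + ketBra (fun p => ψ p.1 p.2 1) := by
  ext p q
  simp [rhoAB, ketBra, vecMulVec_apply, Fin.sum_univ_two]

lemma rhoAS_eq_rhoAB_swap (ψ : Fin 2 → Fin 2 → Fin 2 → ℂ) :
    rhoAS ψ = rhoAB (fun i j l => ψ i l j) := rfl

section WState

variable (a b c : ℂ)

lemma psiW3_swap : (fun i j l => psiW3 a b c i l j) = psiW3 a c b := by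
  funext i j l
  fin_cases i <;> fin_cases j <;> fin_cases l <;> simp [psiW3]

lemma rhoAS_psiW3 : rhoAS (psiW3 a b c) = rhoAB (psiW3 a c b) := by
  rw [rhoAS_eq_rhoAB_swap, psiW3_swap]

lemma star_dotProduct_spinFlipVec_psiW3 :
    star (fun p : Fin 2 × Fin 2 => psiW3 a b c p.1 p.2 0) ⬝ᵥ
        spinFlipVec (fun p => psiW3 a b c p.1 p.2 0) = 2 * star a * star b := by
  simp [psiW3, dotProduct, Fintype.sum_prod_type, spinFlipVec, mulVec, sigmaY]
  ring

lemma psiW3_slice_one_orthogonal :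
    let x : Fin 2 × Fin 2 → ℂ := fun p => psiW3 a b c p.1 p.2 0
    let y : Fin 2 × Fin 2 → ℂ := fun p => psiW3 a b c p.1 p.2 1
    star y ⬝ᵥ x = 0 ∧ star y ⬝ᵥ spinFlipVec x = 0 ∧ star y ⬝ᵥ spinFlipVec y = 0 := by
  simp [psiW3, dotProduct, Fintype.sum_prod_type, spinFlipVec, mulVec, sigmaY]

lemma coA_rhoAB_psiW3 : CoA (rhoAB (psiW3 a b c)) = 2 * ‖a‖ * ‖b‖ := by
  obtain ⟨hyx, hyx', hyy'⟩ := psiW3_slice_one_orthogonal a b c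
  rw [rhoAB_eq_ketBra_add_ketBra, coA_ketBra_add_ketBra hyx hyx' hyy',
    star_dotProduct_spinFlipVec_psiW3]
  simp

lemma conc_rhoAB_psiW3 : Conc (rhoAB (psiW3 a b c)) = 2 * ‖a‖ * ‖b‖ := by
  obtain ⟨hyx, hyx', hyy'⟩ := psiW3_slice_one_orthogonal a b c
  rw [rhoAB_eq_ketBra_add_ketBra, conc_ketBra_add_ketBra hyx hyx' hyy',
    star_dotProduct_spinFlipVec_psiW3]
  simp

lemma det_rhoA_psiW3 : (rhoA (psiW3 a b c)).det = ((‖a‖ ^ 2 * (‖b‖ ^ 2 + ‖c‖ ^ 2) : ℝ) : ℂ) := by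
  rw [det_fin_two]
  simp [rhoA, psiW3, Fin.sum_univ_two, mul_conj, normSq_eq_norm_sq]
  ring

end WState

theorem CKW_and_dual_saturated_for_W_class_general (α₁ α₂ α₃ : ℂ) :
    Conc (rhoAB (psiW3 α₁ α₂ α₃)) = 2 * ‖α₁‖ * ‖α₂‖ ∧
    CoA (rhoAB (psiW3 α₁ α₂ α₃)) = 2 * ‖α₁‖ * ‖α₂‖ ∧
    Conc (rhoAS (psiW3 α₁ α₂ α₃)) = 2 * ‖α₁‖ * ‖α₃‖ ∧
    CoA (rhoAS (psiW3 α₁ α₂ α₃)) = 2 * ‖α₁‖ * ‖α₃‖ ∧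
    4 * (rhoA (psiW3 α₁ α₂ α₃)).det.re =
      4 * ‖α₁‖ ^ 2 * (‖α₂‖ ^ 2 + ‖α₃‖ ^ 2) ∧
    Conc (rhoAB (psiW3 α₁ α₂ α₃)) ^ 2 + Conc (rhoAS (psiW3 α₁ α₂ α₃)) ^ 2 =
      4 * (rhoA (psiW3 α₁ α₂ α₃)).det.re ∧
    CoA (rhoAB (psiW3 α₁ α₂ α₃)) ^ 2 + CoA (rhoAS (psiW3 α₁ α₂ α₃)) ^ 2 =
      4 * (rhoA (psiW3 α₁ α₂ α₃)).det.re := by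
  rw [rhoAS_psiW3, conc_rhoAB_psiW3, conc_rhoAB_psiW3, coA_rhoAB_psiW3, coA_rhoAB_psiW3,
    det_rhoA_psiW3, ofReal_re]
  refine ⟨rfl, rfl, rfl, rfl, by ring, by ring, by ring⟩

theorem CKW_and_dual_saturated_for_W_class (α₁ α₂ α₃ : ℂ)
    (h : Complex.normSq α₁ + Complex.normSq α₂ + Complex.normSq α₃ = 1) :
    Conc (rhoAB (psiW3 α₁ α₂ α₃)) = 2 * ‖α₁‖ * ‖α₂‖ ∧
    CoA (rhoAB (psiW3 α₁ α₂ α₃)) = 2 * ‖α₁‖ * ‖α₂‖ ∧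
    Conc (rhoAS (psiW3 α₁ α₂ α₃)) = 2 * ‖α₁‖ * ‖α₃‖ ∧
    CoA (rhoAS (psiW3 α₁ α₂ α₃)) = 2 * ‖α₁‖ * ‖α₃‖ ∧
    4 * (rhoA (psiW3 α₁ α₂ α₃)).det.re =
      4 * ‖α₁‖ ^ 2 * (‖α₂‖ ^ 2 + ‖α₃‖ ^ 2) ∧
    Conc (rhoAB (psiW3 α₁ α₂ α₃)) ^ 2 + Conc (rhoAS (psiW3 α₁ α₂ α₃)) ^ 2 =
      4 * (rhoA (psiW3 α₁ α₂ α₃)).det.re ∧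
    CoA (rhoAB (psiW3 α₁ α₂ α₃)) ^ 2 + CoA (rhoAS (psiW3 α₁ α₂ α₃)) ^ 2 =
      4 * (rhoA (psiW3 α₁ α₂ α₃)).det.re :=
  CKW_and_dual_saturated_for_W_class_general α₁ α₂ α₃
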